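/- arXiv:2211.00081 — 2 statements merged into one kernel-verified Lean document; each statement's English description precedes it below -/
import Mathlib

section
/- Let ρ ∈ (0,1), g ∈ C¹[0,T] with g(0) ≠ 0. Define b(λ, t₀) = ∫_0^{t₀} g(t₀ - s) s^{ρ-1} E_{ρ,ρ}(-λ s^ρ) ds. Then b(λ, t₀) = g(0) t₀^ρ E_{ρ,ρ+1}(-λ t₀^ρ) + g'(ξ) t₀^{ρ+1} E_{ρ,ρ+2}(-λ t₀^ρ) for some ξ ∈ [0, t₀]. -/
/-- The two-parameter Mittag-Leffler function (real argument). -/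
noncomputable def ML (ρ μ x : ℝ) : ℝ := ∑' k : ℕ, x ^ k / Real.Gamma (ρ * k + μ)

/-!
Put `W(s) = s^ρ E_{ρ,ρ+1}(-λ s^ρ)`. Integrating the series term by term against `(t - s)^q`
(a Beta integral per term) gives `W' = s^{ρ-1} E_{ρ,ρ}(-λ s^ρ)` and
`∫₀^t W = t^{ρ+1} E_{ρ,ρ+2}(-λ t^ρ)`, so integration by parts turns `b(λ, t₀)` into
`g(0) W(t₀) + ∫₀^{t₀} g'(t₀ - s) W(s) ds`, and the first mean value theorem for integrals
finishes the proof once `W ≥ 0`.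

Since `E_{ρ,1}(x) = 1 + x E_{ρ,ρ+1}(x)`, the sign of `W` amounts to `u(t) = E_{ρ,1}(-λ t^ρ) ≤ 1`.
The case `q = -ρ` of the same computation says that the Caputo derivative of order `ρ` of `u`
is `-λ u`. At a maximum point `τ > 0` of `u` on `[0, t]` that derivative is at least
`τ^{-ρ} (u(τ) - u(0)) / Γ(1 - ρ)`, which forces `u(τ) ≤ u(0) = 1`.
-/

open Set Filter Topology MeasureTheory Real

theorem Real.Gamma_mul_sub_one_rpow_le_Gamma_add {x ρ : ℝ} (hx : 1 < x) (hρ : 0 < ρ) :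
    Gamma x * (x - 1) ^ ρ ≤ Gamma (x + ρ) := by
  have hx₁ : 0 < x - 1 := by linarith
  have hΓx : 0 < Gamma x := Gamma_pos_of_pos (by linarith)
  have hΓx₁ : 0 < Gamma (x - 1) := Gamma_pos_of_pos hx₁
  have hslope := convexOn_log_Gamma.slope_mono_adjacent (mem_Ioi.2 hx₁)
    (mem_Ioi.2 (by linarith : 0 < x + ρ)) (by linarith : x - 1 < x) (by linarith : x < x + ρ)
  have hΓ_rec : Gamma x = (x - 1) * Gamma (x - 1) := by
    simpa using Gamma_add_one hx₁.ne'
  simp only [Function.comp, hΓ_rec, log_mul hx₁.ne' hΓx₁.ne', sub_sub_cancel, div_one,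
    add_sub_cancel_left, add_sub_cancel_right, le_div_iff₀ hρ] at hslope
  rw [← exp_log hΓx, ← exp_log (Gamma_pos_of_pos (by linarith : 0 < x + ρ)),
    rpow_def_of_pos hx₁, ← exp_add, exp_le_exp, hΓ_rec, log_mul hx₁.ne' hΓx₁.ne']
  linarith

theorem summable_ML_series {ρ : ℝ} (hρ : 0 < ρ) (μ x : ℝ) :
    Summable fun k : ℕ => x ^ k / Gamma (ρ * k + μ) := by
  have hlin : Tendsto (fun k : ℕ => ρ * k + μ) atTop atTop :=
    tendsto_atTop_add_const_right _ _
      (tendsto_natCast_atTop_atTop.const_mul_atTop hρ)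
  have hpow : Tendsto (fun k : ℕ => (ρ * k + μ - 1) ^ ρ) atTop atTop :=
    (tendsto_rpow_atTop hρ).comp (tendsto_atTop_add_const_right _ _ hlin)
  refine summable_of_ratio_norm_eventually_le (r := 1 / 2) (by norm_num) ?_
  filter_upwards [hlin.eventually_ge_atTop 2, hpow.eventually_ge_atTop (2 * |x|)]
    with k hk₂ hkx
  have hΓ : 0 < Gamma (ρ * k + μ) := Gamma_pos_of_pos (by linarith)
  have hratio : Gamma (ρ * k + μ) * (2 * |x|) ≤ Gamma (ρ * k + μ + ρ) :=
    (mul_le_mul_of_nonneg_left hkx hΓ.le).trans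
      (Gamma_mul_sub_one_rpow_le_Gamma_add (by linarith) hρ)
  have hΓ' : 0 < Gamma (ρ * k + μ + ρ) := Gamma_pos_of_pos (by linarith)
  rw [show ρ * ((k + 1 : ℕ) : ℝ) + μ = ρ * k + μ + ρ by push_cast; ring]
  simp only [norm_div, norm_pow, norm_eq_abs, abs_of_pos hΓ, abs_of_pos hΓ', pow_succ, abs_mul,
    abs_pow]
  rw [div_le_iff₀ hΓ']
  calc |x| ^ k * |x| = |x| ^ k / Gamma (ρ * k + μ) * (Gamma (ρ * k + μ) * |x|) := by
        field_simp
    _ ≤ |x| ^ k / Gamma (ρ * k + μ) * (Gamma (ρ * k + μ + ρ) / 2) := by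
        gcongr; linarith
    _ = 1 / 2 * (|x| ^ k / Gamma (ρ * k + μ)) * Gamma (ρ * k + μ + ρ) := by ring

theorem continuous_ML {ρ : ℝ} (hρ : 0 < ρ) (μ : ℝ) : Continuous (ML ρ μ) := by
  refine continuous_iff_continuousAt.2 fun x => ?_
  have hx : x ∈ Metric.ball (0 : ℝ) (|x| + 1) := by simp
  refine (continuousOn_tsum (fun k => (continuous_pow k).div_const _ |>.continuousOn)
    (summable_ML_series hρ μ (|x| + 1)).abs fun k y hy => ?_).continuousAt
    (Metric.isOpen_ball.mem_nhds hx)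
  rw [mem_ball_zero_iff, norm_eq_abs] at hy
  simp only [norm_div, norm_pow, norm_eq_abs, abs_div, abs_pow,
    abs_of_pos (by positivity : 0 < |x| + 1)]
  gcongr

theorem continuous_ML_mul_rpow {ρ : ℝ} (hρ : 0 < ρ) (μ a : ℝ) :
    Continuous fun s : ℝ => ML ρ μ (a * s ^ ρ) :=
  (continuous_ML hρ μ).comp (continuous_const.mul (continuous_rpow_const hρ.le))

theorem ML_eq_inv_Gamma_add_mul_ML {ρ : ℝ} (hρ : 0 < ρ) (μ x : ℝ) :
    ML ρ μ x = (Gamma μ)⁻¹ + x * ML ρ (ρ + μ) x := by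
  rw [ML, (summable_ML_series hρ μ x).tsum_eq_zero_add, ML, ← tsum_mul_left]
  congr 1
  · simp
  · refine tsum_congr fun k => ?_
    rw [show ρ * ((k + 1 : ℕ) : ℝ) + μ = ρ * k + (ρ + μ) by push_cast; ring, pow_succ]
    ring

theorem rpow_mul_ML_eq_tsum {ρ μ a c s : ℝ} (hs : 0 < s) :
    s ^ c * ML ρ μ (a * s ^ ρ) = ∑' k : ℕ, a ^ k / Gamma (ρ * k + μ) * s ^ (ρ * k + c) := by
  rw [ML, ← tsum_mul_left]
  refine tsum_congr fun k => ?_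
  rw [mul_pow, ← rpow_natCast (s ^ ρ), ← rpow_mul hs.le, rpow_add hs]
  ring

theorem intervalIntegrable_sub_rpow_mul_rpow {p q t : ℝ} (hp : -1 < p) (hq : -1 < q)
    (ht : 0 < t) : IntervalIntegrable (fun s => (t - s) ^ q * s ^ p) volume 0 t := by
  have hmid : (0 : ℝ) ≤ t / 2 := by positivity
  have hleft : IntervalIntegrable (fun s => (t - s) ^ q * s ^ p) volume 0 (t / 2) := by
    refine (intervalIntegral.intervalIntegrable_rpow' hp).continuousOn_mul ?_
    refine (continuousOn_const.sub continuousOn_id).rpow_const fun s hs => Or.inl ?_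
    rw [uIcc_of_le hmid] at hs
    exact (sub_pos.2 (by simp only [id]; linarith [hs.2])).ne'
  have hright : IntervalIntegrable (fun s => (t - s) ^ q * s ^ p) volume (t / 2) t := by
    have h := (intervalIntegral.intervalIntegrable_rpow' (a := 0) (b := t / 2) hq).comp_sub_left
      t
    rw [sub_zero, sub_half] at h
    refine h.symm.mul_continuousOn (continuousOn_id.rpow_const fun s hs => Or.inl ?_)
    rw [uIcc_of_le (by linarith)] at hs
    exact (lt_of_lt_of_le (by linarith) hs.1).ne'
  exact hleft.trans hright

theorem integral_sub_rpow_mul_rpow {p q t : ℝ} (hp : -1 < p) (hq : -1 < q) (ht : 0 < t) :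
    ∫ s in (0 : ℝ)..t, (t - s) ^ q * s ^ p
      = Gamma (p + 1) * Gamma (q + 1) / Gamma (p + q + 2) * t ^ (p + q + 1) := by
  have hΓ : 0 < Gamma (p + q + 2) := Gamma_pos_of_pos (by linarith)
  have hbeta : Complex.betaIntegral (p + 1 : ℝ) (q + 1 : ℝ)
      = (Gamma (p + 1) * Gamma (q + 1) / Gamma (p + q + 2) : ℝ) := by
    have h := Complex.Gamma_mul_Gamma_eq_betaIntegral
      (s := (p + 1 : ℝ)) (t := (q + 1 : ℝ)) (by simp; linarith) (by simp; linarith)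
    rw [← Complex.ofReal_add, show p + 1 + (q + 1) = p + q + 2 by ring] at h
    simp only [Complex.Gamma_ofReal] at h
    rw [Complex.ofReal_div, eq_div_iff (by exact_mod_cast hΓ.ne'), Complex.ofReal_mul, h]
    ring
  have hscaled := Complex.betaIntegral_scaled (p + 1 : ℝ) (q + 1 : ℝ) ht
  have hexp : ((p + 1 : ℝ) : ℂ) + ((q + 1 : ℝ) : ℂ) - 1 = ((p + q + 1 : ℝ) : ℂ) := by
    push_cast; ring
  rw [hbeta, hexp, ← Complex.ofReal_cpow ht.le, ← Complex.ofReal_mul] at hscaled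
  apply Complex.ofReal_injective
  rw [← intervalIntegral.integral_ofReal, mul_comm, ← hscaled]
  refine intervalIntegral.integral_congr fun s hs => ?_
  rw [uIcc_of_le ht.le] at hs
  simp only [Complex.ofReal_add, Complex.ofReal_one, add_sub_cancel_right, Complex.ofReal_mul,
    Complex.ofReal_cpow hs.1, Complex.ofReal_cpow (sub_nonneg.2 hs.2), Complex.ofReal_sub]
  ring

theorem integral_sub_rpow_mul_rpow_mul_ML {ρ c q t : ℝ} (hρ : 0 < ρ) (hc : 0 < c) (hq : -1 < q)
    (ht : 0 < t) (a : ℝ) :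
    ∫ s in (0 : ℝ)..t, (t - s) ^ q * (s ^ (c - 1) * ML ρ c (a * s ^ ρ))
      = Gamma (q + 1) * t ^ (c + q) * ML ρ (c + q + 1) (a * t ^ ρ) := by
  set F : ℝ → ℕ → ℝ → ℝ := fun b k s =>
    b ^ k / Gamma (ρ * k + c) * ((t - s) ^ q * s ^ (ρ * k + c - 1)) with hF
  have hp (k : ℕ) : -1 < ρ * k + c - 1 := by
    have : 0 ≤ ρ * k := by positivity
    linarith
  have hΓ (k : ℕ) : 0 < Gamma (ρ * k + c) := Gamma_pos_of_pos (by positivity)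
  have hF_int (b : ℝ) (k : ℕ) : IntegrableOn (F b k) (Ioc 0 t) :=
    (intervalIntegrable_iff_integrableOn_Ioc_of_le ht.le).1
      ((intervalIntegrable_sub_rpow_mul_rpow (hp k) hq ht).const_mul _)
  have hF_integral (b : ℝ) (k : ℕ) : ∫ s in Ioc 0 t, F b k s
      = Gamma (q + 1) * t ^ (c + q) * ((b * t ^ ρ) ^ k / Gamma (ρ * k + (c + q + 1))) := by
    rw [← intervalIntegral.integral_of_le ht.le, intervalIntegral.integral_const_mul,
      integral_sub_rpow_mul_rpow (hp k) hq ht, show ρ * k + c - 1 + 1 = ρ * k + c by ring,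
      show ρ * k + c - 1 + q + 2 = ρ * k + (c + q + 1) by ring,
      show ρ * k + c - 1 + q + 1 = ρ * k + (c + q) by ring, mul_pow, ← rpow_natCast (t ^ ρ),
      ← rpow_mul ht.le, rpow_add ht]
    field_simp [(hΓ k).ne']
  have hF_norm (k : ℕ) : ∀ s ∈ Ioc 0 t, ‖F a k s‖ = F |a| k s := fun s hs => by
    rw [hF, norm_mul, norm_div, norm_pow, Real.norm_of_nonneg (hΓ k).le, Real.norm_of_nonneg
      (mul_nonneg (rpow_nonneg (sub_nonneg.2 hs.2) _) (rpow_nonneg hs.1.le _)), norm_eq_abs]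
  have hsum : ∀ s ∈ Ioc 0 t,
      (t - s) ^ q * (s ^ (c - 1) * ML ρ c (a * s ^ ρ)) = ∑' k, F a k s := fun s hs => by
    rw [rpow_mul_ML_eq_tsum hs.1, ← tsum_mul_left]
    exact tsum_congr fun k => by rw [hF]; ring_nf
  have hsummable : Summable fun k => ∫ s in Ioc 0 t, ‖F a k s‖ := by
    refine ((summable_ML_series hρ (c + q + 1) (|a| * t ^ ρ)).mul_left
      (Gamma (q + 1) * t ^ (c + q))).congr fun k => ?_
    rw [setIntegral_congr_fun measurableSet_Ioc (hF_norm k), hF_integral]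
  rw [intervalIntegral.integral_of_le ht.le, setIntegral_congr_fun measurableSet_Ioc hsum,
    ← integral_tsum_of_summable_integral_norm (hF_int a) hsummable]
  simp_rw [hF_integral]
  rw [tsum_mul_left, ML]

theorem intervalIntegrable_sub_rpow_mul_rpow_mul_ML {ρ c q t : ℝ} (hρ : 0 < ρ) (hc : 0 < c)
    (hq : -1 < q) (ht : 0 < t) (a : ℝ) :
    IntervalIntegrable (fun s => (t - s) ^ q * (s ^ (c - 1) * ML ρ c (a * s ^ ρ))) volume 0 t :=
  by
  simpa only [mul_assoc] using (intervalIntegrable_sub_rpow_mul_rpow (p := c - 1) (by linarith)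
    hq ht).mul_continuousOn (continuous_ML_mul_rpow hρ c a).continuousOn

theorem intervalIntegrable_rpow_mul_ML {ρ c t : ℝ} (hρ : 0 < ρ) (hc : 0 < c) (ht : 0 < t)
    (a : ℝ) : IntervalIntegrable (fun s => s ^ (c - 1) * ML ρ c (a * s ^ ρ)) volume 0 t := by
  simpa using intervalIntegrable_sub_rpow_mul_rpow_mul_ML hρ hc (q := 0) (by norm_num) ht a

theorem integral_rpow_mul_ML {ρ c t : ℝ} (hρ : 0 < ρ) (hc : 0 < c) (ht : 0 < t) (a : ℝ) :
    ∫ s in (0 : ℝ)..t, s ^ (c - 1) * ML ρ c (a * s ^ ρ) = t ^ c * ML ρ (c + 1) (a * t ^ ρ) := by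
  simpa using integral_sub_rpow_mul_rpow_mul_ML hρ hc (q := 0) (by norm_num) ht a

theorem hasDerivAt_rpow_mul_ML {ρ c s : ℝ} (hρ : 0 < ρ) (hc : 0 < c) (a : ℝ) (hs : 0 < s) :
    HasDerivAt (fun σ => σ ^ c * ML ρ (c + 1) (a * σ ^ ρ))
      (s ^ (c - 1) * ML ρ c (a * s ^ ρ)) s := by
  have hcont : ContinuousOn (fun σ => σ ^ (c - 1) * ML ρ c (a * σ ^ ρ)) (Ioi 0) :=
    (continuousOn_id.rpow_const fun σ hσ => Or.inl (ne_of_gt hσ)).mul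
      (continuous_ML_mul_rpow hρ c a).continuousOn
  refine (intervalIntegral.integral_hasDerivAt_right
    (intervalIntegrable_rpow_mul_ML hρ hc hs a)
    (hcont.stronglyMeasurableAtFilter isOpen_Ioi s hs)
    (hcont.continuousAt (Ioi_mem_nhds hs))).congr_of_eventuallyEq ?_
  filter_upwards [Ioi_mem_nhds hs] with σ hσ
  exact (integral_rpow_mul_ML hρ hc hσ a).symm

theorem tendsto_rpow_neg_mul_sub_nhdsLE {u : ℝ → ℝ} {u'b ρ b : ℝ} (hρ : ρ < 1)
    (hu : HasDerivAt u u'b b) :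
    Tendsto (fun s => (b - s) ^ (-ρ) * (u s - u b)) (𝓝[≤] b) (𝓝 0) := by
  -- `u s - u b = O(b - s)` beats the singularity `(b - s) ^ (-ρ)` since `ρ < 1`
  obtain ⟨C, hC⟩ := hu.isBigO_sub.bound
  have hlim : Tendsto (fun s => C * (b - s) ^ (1 - ρ)) (𝓝[≤] b) (𝓝 0) := by
    have h : Tendsto (fun s : ℝ => C * (b - s) ^ (1 - ρ)) (𝓝 b) (𝓝 (C * (b - b) ^ (1 - ρ))) :=
      (continuousAt_const.mul ((continuousAt_const.sub continuousAt_id).rpow_const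
        (Or.inr (by linarith)))).tendsto
    rw [sub_self, zero_rpow (by linarith), mul_zero] at h
    exact h.mono_left nhdsWithin_le_nhds
  refine squeeze_zero_norm' ?_ hlim
  filter_upwards [self_mem_nhdsWithin, nhdsWithin_le_nhds hC] with s hs hCs
  have hbs : 0 ≤ b - s := sub_nonneg.2 hs
  rw [norm_mul, norm_of_nonneg (rpow_nonneg hbs _), show 1 - ρ = -ρ + 1 by ring,
    rpow_add_one' hbs (by linarith), mul_comm C, mul_assoc]
  refine mul_le_mul_of_nonneg_left ?_ (rpow_nonneg hbs _)
  rwa [norm_sub_rev s b, norm_of_nonneg hbs, mul_comm] at hCs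

theorem rpow_mul_sub_le_integral_of_isMaxOn {u u' : ℝ → ℝ} {ρ a b : ℝ} (hρ₀ : 0 ≤ ρ)
    (hρ₁ : ρ < 1) (hab : a < b) (hu : ContinuousOn u (Icc a b))
    (hderiv : ∀ s ∈ Ioc a b, HasDerivAt u (u' s) s)
    (hint : IntervalIntegrable (fun s => (b - s) ^ (-ρ) * u' s) volume a b)
    (hmax : IsMaxOn u (Icc a b) b) :
    (b - a) ^ (-ρ) * (u b - u a) ≤ ∫ s in a..b, (b - s) ^ (-ρ) * u' s := by
  set v : ℝ → ℝ := fun s => (b - s) ^ (-ρ) * (u s - u b) with hv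
  have hvb : v b = 0 := by simp [hv]
  have hv_cont_b : ContinuousWithinAt v (Icc a b) b := by
    rw [ContinuousWithinAt, hvb]
    exact (tendsto_rpow_neg_mul_sub_nhdsLE hρ₁ (hderiv b ⟨hab, le_rfl⟩)).mono_left
      (nhdsWithin_mono _ fun s hs => hs.2)
  have hv_cont : ContinuousOn v (Icc a b) := by
    intro s hs
    rcases hs.2.eq_or_lt with hsb | hsb
    · rw [hsb]; exact hv_cont_b
    · exact ((continuousAt_const.sub continuousAt_id).rpow_const
        (Or.inl (sub_pos.2 hsb).ne')).continuousWithinAt.mul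
        ((hu s hs).sub continuousWithinAt_const)
  have hv_deriv : ∀ s ∈ Ioo a b, HasDerivAt v
      (-1 * -ρ * (b - s) ^ (-ρ - 1) * (u s - u b) + (b - s) ^ (-ρ) * u' s) s := fun s hs =>
    (((hasDerivAt_id s).const_sub b).rpow_const (Or.inl (sub_pos.2 hs.2).ne')).mul
      ((hderiv s ⟨hs.1, hs.2.le⟩).sub_const (u b))
  have hv_le : ∀ s ∈ Ioo a b,
      -1 * -ρ * (b - s) ^ (-ρ - 1) * (u s - u b) + (b - s) ^ (-ρ) * u' s
        ≤ (b - s) ^ (-ρ) * u' s := fun s hs => by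
    have : 0 ≤ ρ * (b - s) ^ (-ρ - 1) := mul_nonneg hρ₀ (rpow_nonneg (sub_pos.2 hs.2).le _)
    have hus : u s ≤ u b := hmax (Ioo_subset_Icc_self hs)
    nlinarith [mul_nonneg this (sub_nonneg.2 hus)]
  have h := intervalIntegral.sub_le_integral_of_hasDeriv_right_of_le hab.le hv_cont
    (fun s hs => (hv_deriv s hs).hasDerivWithinAt)
    ((intervalIntegrable_iff_integrableOn_Icc_of_le hab.le).1 hint) hv_le
  rw [hvb] at h
  simp only [hv] at h
  linarith

theorem ML_one_neg_mul_rpow_le_one {ρ lam t : ℝ} (hρ₀ : 0 < ρ) (hρ₁ : ρ < 1) (hlam : 0 ≤ lam)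
    (ht : 0 ≤ t) : ML ρ 1 (-lam * t ^ ρ) ≤ 1 := by
  set u : ℝ → ℝ := fun s => ML ρ 1 (-lam * s ^ ρ) with hu
  have hu_eq : u = fun s => 1 + -lam * (s ^ ρ * ML ρ (ρ + 1) (-lam * s ^ ρ)) := by
    funext s
    rw [hu]
    beta_reduce
    rw [ML_eq_inv_Gamma_add_mul_ML hρ₀ 1, Gamma_one, inv_one]
    ring
  have hu₀ : u 0 = 1 := by simp [hu_eq, zero_rpow hρ₀.ne']
  obtain ⟨τ, hτ, hmax⟩ : ∃ τ ∈ Icc 0 t, IsMaxOn u (Icc 0 t) τ :=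
    isCompact_Icc.exists_isMaxOn (nonempty_Icc.2 ht)
      (continuous_ML_mul_rpow hρ₀ 1 (-lam)).continuousOn
  suffices u τ ≤ 1 from (hmax ⟨ht, le_rfl⟩).trans this
  rcases hτ.1.eq_or_lt with hτ₀ | hτ₀
  · rw [← hτ₀, hu₀]
  have hderiv : ∀ s ∈ Ioc 0 τ,
      HasDerivAt u ((-lam) * (s ^ (ρ - 1) * ML ρ ρ (-lam * s ^ ρ))) s := fun s hs => by
    rw [hu_eq]
    exact ((hasDerivAt_rpow_mul_ML hρ₀ hρ₀ (-lam) hs.1).const_mul (-lam)).const_add 1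
  have hint := intervalIntegrable_sub_rpow_mul_rpow_mul_ML hρ₀ hρ₀ (q := -ρ) (by linarith) hτ₀
    (-lam)
  have hI : ∫ s in (0 : ℝ)..τ,
      (τ - s) ^ (-ρ) * ((-lam) * (s ^ (ρ - 1) * ML ρ ρ (-lam * s ^ ρ)))
        = -lam * (Gamma (1 - ρ) * u τ) := by
    simp only [mul_left_comm _ (-lam), intervalIntegral.integral_const_mul,
      integral_sub_rpow_mul_rpow_mul_ML hρ₀ hρ₀ (q := -ρ) (by linarith) hτ₀, add_neg_cancel,
      rpow_zero, neg_add_eq_sub, zero_add, mul_one]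
    rfl
  have hcaputo := rpow_mul_sub_le_integral_of_isMaxOn (u := u) hρ₀.le hρ₁ hτ₀
    (continuous_ML_mul_rpow hρ₀ 1 (-lam)).continuousOn hderiv
    (by simpa only [mul_left_comm] using hint.const_mul (-lam))
    (hmax.on_subset (Icc_subset_Icc_right hτ.2))
  rw [hI, sub_zero, hu₀] at hcaputo
  have h₁ : 1 ≤ u τ := hu₀ ▸ hmax ⟨le_rfl, ht⟩
  have hΓ : 0 < Gamma (1 - ρ) := Gamma_pos_of_pos (by linarith)
  have hτρ : 0 < τ ^ (-ρ) := rpow_pos_of_pos hτ₀ _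
  nlinarith [mul_nonneg (mul_nonneg hlam hΓ.le) (zero_le_one.trans h₁)]

theorem rpow_mul_ML_nonneg {ρ lam s : ℝ} (hρ₀ : 0 < ρ) (hρ₁ : ρ < 1) (hlam : 0 < lam)
    (hs : 0 ≤ s) : 0 ≤ s ^ ρ * ML ρ (ρ + 1) (-lam * s ^ ρ) := by
  have h := ML_one_neg_mul_rpow_le_one hρ₀ hρ₁ hlam.le hs
  rw [ML_eq_inv_Gamma_add_mul_ML hρ₀, Gamma_one, inv_one] at h
  exact (mul_nonneg_iff_of_pos_left hlam).1 (by linarith)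

theorem mapsTo_const_sub_uIcc_zero {t : ℝ} (ht : 0 ≤ t) :
    MapsTo (fun s => t - s) (uIcc 0 t) (Icc 0 t) := fun s hs => by
  rw [uIcc_of_le ht] at hs
  exact ⟨by linarith [hs.2], by linarith [hs.1]⟩

theorem integral_comp_sub_mul_eq_add_integral {g g' W w : ℝ → ℝ} {t : ℝ} (ht : 0 ≤ t)
    (hg : ∀ s ∈ Icc 0 t, HasDerivAt g (g' s) s) (hg' : ContinuousOn g' (Icc 0 t))
    (hW : ContinuousOn W (Icc 0 t)) (hW' : ∀ s ∈ Ioo 0 t, HasDerivAt W (w s) s)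
    (hw : IntervalIntegrable w volume 0 t) (hW₀ : W 0 = 0) :
    ∫ s in (0 : ℝ)..t, g (t - s) * w s = g 0 * W t + ∫ s in (0 : ℝ)..t, g' (t - s) * W s := by
  have hmaps := mapsTo_const_sub_uIcc_zero ht
  have h := intervalIntegral.integral_mul_deriv_eq_deriv_mul_of_hasDerivAt
    (u := fun s => g (t - s)) (u' := fun s => -g' (t - s))
    (fun s hs => (hg _ (hmaps hs)).continuousAt.comp
      (continuousAt_const.sub continuousAt_id) |>.continuousWithinAt)
    (uIcc_of_le ht ▸ hW)
    (fun s hs => (hg _ (hmaps (Ioo_subset_Icc_self hs))).comp_const_sub t s)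
    (fun s hs => hW' s (by simpa [ht] using hs))
    (hg'.comp (continuousOn_const.sub continuousOn_id) hmaps).neg.intervalIntegrable hw
  rw [sub_self, sub_zero, hW₀, mul_zero, sub_zero] at h
  simpa only [neg_mul, intervalIntegral.integral_neg, sub_neg_eq_add] using h

theorem exists_integral_comp_sub_mul_eq_mul_integral {f W : ℝ → ℝ} {t : ℝ} (ht : 0 ≤ t)
    (hf : ContinuousOn f (Icc 0 t)) (hW : IntervalIntegrable W volume 0 t)
    (hW₀ : ∀ s ∈ Ioc 0 t, 0 ≤ W s) :
    ∃ ξ ∈ Icc 0 t, ∫ s in (0 : ℝ)..t, f (t - s) * W s = f ξ * ∫ s in (0 : ℝ)..t, W s := by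
  have hmaps := mapsTo_const_sub_uIcc_zero ht
  obtain ⟨c, hc, hmean⟩ := exists_eq_const_mul_intervalIntegral_of_nonneg
    (hf.comp (continuousOn_const.sub continuousOn_id) hmaps) hW (uIoc_of_le ht ▸ hW₀)
  exact ⟨t - c, hmaps hc, hmean⟩

theorem b_integration_by_parts_general (ρ T t₀ : ℝ) (hρ : ρ ∈ Set.Ioo (0:ℝ) 1)
    (ht₀ : 0 < t₀) (ht₀T : t₀ ≤ T) (g g' : ℝ → ℝ) (lam : ℝ) (hlam : 0 < lam)
    (hderiv : ∀ s ∈ Set.Icc (0:ℝ) T, HasDerivAt g (g' s) s)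
    (hg' : ContinuousOn g' (Set.Icc 0 T)) :
    ∃ ξ ∈ Set.Icc (0:ℝ) t₀,
      (∫ s in (0:ℝ)..t₀, g (t₀ - s) * s ^ (ρ - 1) * ML ρ ρ (-lam * s ^ ρ))
        = g 0 * t₀ ^ ρ * ML ρ (ρ + 1) (-lam * t₀ ^ ρ)
          + g' ξ * t₀ ^ (ρ + 1) * ML ρ (ρ + 2) (-lam * t₀ ^ ρ) := by
  obtain ⟨hρ₀, hρ₁⟩ := hρ
  set W : ℝ → ℝ := fun s => s ^ ρ * ML ρ (ρ + 1) (-lam * s ^ ρ) with hW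
  have hW_cont : Continuous W :=
    (continuous_rpow_const hρ₀.le).mul (continuous_ML_mul_rpow hρ₀ (ρ + 1) (-lam))
  have hsub : Icc 0 t₀ ⊆ Icc 0 T := Icc_subset_Icc_right ht₀T
  have hibp := integral_comp_sub_mul_eq_add_integral ht₀.le (fun s hs => hderiv s (hsub hs))
    (hg'.mono hsub) hW_cont.continuousOn
    (fun s hs => hasDerivAt_rpow_mul_ML hρ₀ hρ₀ (-lam) hs.1)
    (intervalIntegrable_rpow_mul_ML hρ₀ hρ₀ ht₀ (-lam)) (by simp [hW, zero_rpow hρ₀.ne'])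
  obtain ⟨ξ, hξ, hmean⟩ := exists_integral_comp_sub_mul_eq_mul_integral ht₀.le
    (hg'.mono hsub) (hW_cont.intervalIntegrable 0 t₀)
    fun s hs => rpow_mul_ML_nonneg hρ₀ hρ₁ hlam hs.1.le
  have hW_integral :
      ∫ s in (0 : ℝ)..t₀, W s = t₀ ^ (ρ + 1) * ML ρ (ρ + 2) (-lam * t₀ ^ ρ) := by
    have h := integral_rpow_mul_ML hρ₀ (c := ρ + 1) (by linarith) ht₀ (-lam)
    rwa [add_sub_cancel_right, add_assoc, one_add_one_eq_two] at h
  refine ⟨ξ, hξ, ?_⟩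
  simp only [mul_assoc] at hibp ⊢
  rw [hibp, hmean, hW_integral]

theorem b_integration_by_parts (ρ T t₀ : ℝ) (hρ : ρ ∈ Set.Ioo (0:ℝ) 1)
    (ht₀ : 0 < t₀) (ht₀T : t₀ ≤ T) (g g' : ℝ → ℝ) (lam : ℝ) (hlam : 0 < lam)
    (hderiv : ∀ s ∈ Set.Icc (0:ℝ) T, HasDerivAt g (g' s) s)
    (hg' : ContinuousOn g' (Set.Icc 0 T))
    (hg0 : g 0 ≠ 0) :
    ∃ ξ ∈ Set.Icc (0:ℝ) t₀,
      (∫ s in (0:ℝ)..t₀, g (t₀ - s) * s ^ (ρ - 1) * ML ρ ρ (-lam * s ^ ρ))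
        = g 0 * t₀ ^ ρ * ML ρ (ρ + 1) (-lam * t₀ ^ ρ)
          + g' ξ * t₀ ^ (ρ + 1) * ML ρ (ρ + 2) (-lam * t₀ ^ ρ) :=
  b_integration_by_parts_general ρ T t₀ hρ ht₀ ht₀T g g' lam hlam hderiv hg'
end

section
/- For ρ ∈ (0,1) and λ > 0, the function y(t) = E_ρ(-λ t^ρ) satisfies the fractional differential equation D^ρ y(t) = -λ y(t) for t > 0 with y(0) = 1, where D^ρ is the Caputo derivative of order ρ. -/
/-- The Caputo fractional derivative of order ρ. -/
noncomputable def caputo (ρ : ℝ) (h : ℝ → ℝ) (t : ℝ) : ℝ :=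
  (1 / Real.Gamma (1 - ρ)) * ∫ s in (0:ℝ)..t, (t - s) ^ (-ρ) * deriv h s

open Real Set Filter MeasureTheory intervalIntegral

theorem rpow_sub_two_le_exp_mul_Gamma {M s : ℝ} (hM : 1 ≤ M) (hs : 2 ≤ s) :
    M ^ (s - 2) ≤ exp M * Gamma s := by
  obtain ⟨n, hn_le, hn_lt⟩ : ∃ n : ℕ, (n : ℝ) + 1 ≤ s ∧ s < n + 2 := by
    refine ⟨⌊s⌋₊ - 1, ?_, ?_⟩ <;>
    · have h2 : 2 ≤ ⌊s⌋₊ := Nat.le_floor (by exact_mod_cast hs)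
      have := Nat.floor_le (zero_le_two.trans hs)
      have := Nat.lt_floor_add_one s
      push_cast [Nat.cast_sub (one_le_two.trans h2)]
      linarith
  have hn : (1 : ℝ) ≤ n := by
    have : 0 < n := by exact_mod_cast (by linarith : (0 : ℝ) < n)
    exact_mod_cast this
  calc M ^ (s - 2) ≤ M ^ (n : ℝ) := rpow_le_rpow_of_exponent_le hM (by linarith)
    _ ≤ exp M * n.factorial := by
      rw [rpow_natCast, ← div_le_iff₀ (by positivity)]
      exact pow_div_factorial_le_exp M (by linarith) n
    _ = exp M * Gamma (n + 1) := by rw [Gamma_nat_eq_factorial]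
    _ ≤ exp M * Gamma s := by
      gcongr
      exact Gamma_strictMonoOn_Ici.monotoneOn (by simp; linarith) (by simp; linarith) hn_le

theorem summable_pow_div_Gamma_mul_add {a : ℝ} (ha : 0 < a) (b c : ℝ) :
    Summable fun k : ℕ => c ^ k / Gamma (a * k + b) := by
  set M := (|c| + 1) ^ a⁻¹
  have hM : 1 ≤ M := one_le_rpow (by linarith [abs_nonneg c]) (by positivity)
  have hMa : M ^ a = |c| + 1 := rpow_inv_rpow (by positivity) ha.ne'
  have hM0 : 0 < M := by linarith
  have hr0 : 0 ≤ |c| / M ^ a := by positivity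
  have hr1 : |c| / M ^ a < 1 := by rw [hMa, div_lt_one (by positivity)]; linarith
  refine ((summable_geometric_of_lt_one hr0 hr1).mul_left (exp M * M ^ (2 - b))
    ).of_norm_bounded_eventually_nat ?_
  obtain ⟨N, hN⟩ := exists_nat_ge ((2 - b) / a)
  filter_upwards [eventually_ge_atTop N] with k hk
  have hs : 2 ≤ a * k + b := by
    have : (2 - b) / a ≤ k := hN.trans (by exact_mod_cast hk)
    rw [div_le_iff₀ ha] at this; linarith
  have hΓ : 0 < Gamma (a * k + b) := Gamma_pos_of_pos (by linarith)
  have hsplit : M ^ (a * k + b - 2) = (M ^ a) ^ k * M ^ (b - 2) := by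
    rw [← rpow_mul_natCast hM0.le, ← rpow_add hM0]; ring_nf
  rw [norm_div, norm_pow, Real.norm_eq_abs, Real.norm_eq_abs, abs_of_pos hΓ, div_le_iff₀ hΓ]
  calc |c| ^ k = (|c| / M ^ a) ^ k * M ^ (2 - b) * M ^ (a * k + b - 2) := by
        rw [hsplit, div_pow, rpow_sub hM0, rpow_sub hM0]
        field_simp
    _ ≤ (|c| / M ^ a) ^ k * M ^ (2 - b) * (exp M * Gamma (a * k + b)) := by
        gcongr; exact rpow_sub_two_le_exp_mul_Gamma hM hs
    _ = _ := by ring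

theorem integral_rpow_mul_sub_rpow {a b t : ℝ} (ha : 0 < a) (hb : 0 < b) (ht : 0 < t) :
    ∫ s in 0..t, s ^ (a - 1) * (t - s) ^ (b - 1) =
      Gamma a * Gamma b / Gamma (a + b) * t ^ (a + b - 1) := by
  have h := Complex.betaIntegral_scaled a b ht
  rw [Complex.betaIntegral_eq_Gamma_mul_div _ _ (by simpa) (by simpa)] at h
  apply Complex.ofReal_injective
  rw [← intervalIntegral.integral_ofReal]
  push_cast [Complex.ofReal_cpow ht.le, ← Complex.Gamma_ofReal] at h ⊢
  rw [mul_comm, ← h]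
  refine integral_congr fun x hx => ?_
  rw [uIcc_of_le ht.le] at hx
  push_cast [Complex.ofReal_cpow hx.1, Complex.ofReal_cpow (sub_nonneg.2 hx.2)]
  rfl

theorem intervalIntegrable_rpow_mul_sub_rpow {a b t : ℝ} (ha : 0 < a) (hb : 0 < b) (ht : 0 < t) :
    IntervalIntegrable (fun s => s ^ (a - 1) * (t - s) ^ (b - 1)) volume 0 t := by
  -- a non-integrable function has integral `0`, while the Beta integral is positive
  refine intervalIntegrable_of_integral_ne_zero ?_
  rw [integral_rpow_mul_sub_rpow ha hb ht]
  have := Gamma_pos_of_pos ha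
  have := Gamma_pos_of_pos hb
  have := Gamma_pos_of_pos (add_pos ha hb)
  positivity

theorem ML_zero (ρ μ : ℝ) : ML ρ μ 0 = (Gamma μ)⁻¹ := by
  rw [ML, tsum_eq_single 0 fun k hk => by simp [zero_pow hk]]
  simp

noncomputable def mlTerm (ρ x : ℝ) (k : ℕ) (s : ℝ) : ℝ :=
  x ^ k / Gamma (ρ * k + 1) * s ^ (ρ * k)

noncomputable def mlTermDeriv (ρ x : ℝ) (k : ℕ) (s : ℝ) : ℝ :=
  x ^ k / Gamma (ρ * k + 1) * (ρ * k * s ^ (ρ * k - 1))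

section MittagLeffler

variable {ρ s t : ℝ}

theorem mlTerm_eq (x : ℝ) (k : ℕ) (hs : 0 ≤ s) :
    mlTerm ρ x k s = (x * s ^ ρ) ^ k / Gamma (ρ * k + 1) := by
  rw [mlTerm, mul_pow, ← rpow_mul_natCast hs]
  ring

theorem summable_mlTerm (hρ : 0 < ρ) (x : ℝ) (hs : 0 ≤ s) :
    Summable fun k => mlTerm ρ x k s := by
  simpa only [mlTerm_eq x _ hs] using summable_pow_div_Gamma_mul_add hρ 1 (x * s ^ ρ)

theorem ML_mul_rpow_eq_tsum_mlTerm (x : ℝ) (hs : 0 ≤ s) :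
    ML ρ 1 (x * s ^ ρ) = ∑' k, mlTerm ρ x k s := by
  simp only [ML, mlTerm_eq x _ hs]

theorem hasDerivAt_mlTerm (x : ℝ) (k : ℕ) (hs : s ≠ 0) :
    HasDerivAt (mlTerm ρ x k) (mlTermDeriv ρ x k s) s :=
  (hasDerivAt_rpow_const (Or.inl hs)).const_mul _

theorem norm_mlTermDeriv_le (hρ : 0 ≤ ρ) (x : ℝ) (k : ℕ) {ε r : ℝ} (hε : 0 < ε) (hεs : ε ≤ s)
    (hsr : s ≤ r) :
    ‖mlTermDeriv ρ x k s‖ ≤ ρ / ε * ((2 * |x| * r ^ ρ) ^ k / Gamma (ρ * k + 1)) := by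
  have hs : 0 < s := hε.trans_le hεs
  have hΓ : 0 < Gamma (ρ * k + 1) := Gamma_pos_of_pos (by positivity)
  have hk : ρ * k ≤ ρ * 2 ^ k := by gcongr; exact_mod_cast Nat.lt_two_pow_self.le
  have hpow : s ^ (ρ * k - 1) ≤ r ^ (ρ * k) / ε := by
    rw [rpow_sub_one hs.ne']
    have : 0 ≤ r := hs.le.trans hsr
    gcongr
  rw [mlTermDeriv, norm_mul, norm_div, norm_pow, Real.norm_eq_abs, norm_of_nonneg hΓ.le,
    norm_of_nonneg (by positivity)]
  calc |x| ^ k / Gamma (ρ * k + 1) * (ρ * k * s ^ (ρ * k - 1))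
      ≤ |x| ^ k / Gamma (ρ * k + 1) * (ρ * 2 ^ k * (r ^ (ρ * k) / ε)) := by gcongr
    _ = ρ / ε * ((2 * |x| * r ^ ρ) ^ k / Gamma (ρ * k + 1)) := by
      rw [rpow_mul_natCast (hs.le.trans hsr)]
      ring

theorem hasDerivAt_ML_mul_rpow (hρ : 0 < ρ) (x : ℝ) (hs : 0 < s) :
    HasDerivAt (fun u => ML ρ 1 (x * u ^ ρ)) (∑' k, mlTermDeriv ρ x k s) s := by
  have hmem : s ∈ Ioo (s / 2) (s + 1) := ⟨by linarith, by linarith⟩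
  have hderiv := hasDerivAt_tsum_of_isPreconnected
    ((summable_pow_div_Gamma_mul_add hρ 1 (2 * |x| * (s + 1) ^ ρ)).mul_left (ρ / (s / 2)))
    isOpen_Ioo isPreconnected_Ioo
    (fun k u hu => hasDerivAt_mlTerm x k (by linarith [hu.1]))
    (fun k u hu => norm_mlTermDeriv_le hρ.le x k (by positivity) hu.1.le hu.2.le)
    hmem (summable_mlTerm hρ x hs.le) hmem
  refine hderiv.congr_of_eventuallyEq ?_
  filter_upwards [Ioi_mem_nhds hs] with u hu
  exact ML_mul_rpow_eq_tsum_mlTerm x (le_of_lt hu)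

theorem mlTermDeriv_zero (x : ℝ) : mlTermDeriv ρ x 0 = 0 := by
  ext s; simp [mlTermDeriv]

theorem mul_mlTermDeriv_succ (hρ : 0 < ρ) (x : ℝ) (k : ℕ) :
    (fun s => (t - s) ^ (-ρ) * mlTermDeriv ρ x (k + 1) s) = fun s =>
      x ^ (k + 1) / Gamma (ρ * (k + 1)) * (s ^ (ρ * (k + 1) - 1) * (t - s) ^ ((1 - ρ) - 1)) := by
  have hρk : ρ * (k + 1) ≠ 0 := by positivity
  ext s
  rw [mlTermDeriv, Nat.cast_succ, Gamma_add_one hρk, sub_sub_cancel_left]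
  field_simp

theorem integrableOn_mul_mlTermDeriv (hρ0 : 0 < ρ) (hρ1 : ρ < 1) (x : ℝ) (k : ℕ) (ht : 0 < t) :
    IntegrableOn (fun s => (t - s) ^ (-ρ) * mlTermDeriv ρ x k s) (Ioc 0 t) := by
  rcases k with _ | k
  · simp [mlTermDeriv_zero]
  rw [mul_mlTermDeriv_succ hρ0, ← intervalIntegrable_iff_integrableOn_Ioc_of_le ht.le]
  exact (intervalIntegrable_rpow_mul_sub_rpow (by positivity) (by linarith) ht).const_mul _

theorem setIntegral_mul_mlTermDeriv_succ (hρ0 : 0 < ρ) (hρ1 : ρ < 1) (x : ℝ) (k : ℕ)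
    (ht : 0 < t) :
    ∫ s in Ioc 0 t, (t - s) ^ (-ρ) * mlTermDeriv ρ x (k + 1) s =
      Gamma (1 - ρ) * x * mlTerm ρ x k t := by
  have hΓ : Gamma (ρ * (k + 1)) ≠ 0 := (Gamma_pos_of_pos (by positivity)).ne'
  rw [mul_mlTermDeriv_succ hρ0, MeasureTheory.integral_const_mul, ← integral_of_le ht.le,
    integral_rpow_mul_sub_rpow (by positivity) (by linarith) ht, mlTerm,
    show ρ * (k + 1) + (1 - ρ) = ρ * k + 1 by ring, show ρ * k + 1 - 1 = ρ * k by ring]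
  field_simp
  ring

theorem norm_mul_mlTermDeriv (hρ : 0 ≤ ρ) (x : ℝ) (k : ℕ) (hs : s ∈ Ioc 0 t) :
    ‖(t - s) ^ (-ρ) * mlTermDeriv ρ x k s‖ = (t - s) ^ (-ρ) * mlTermDeriv ρ |x| k s := by
  have hΓ : 0 < Gamma (ρ * k + 1) := Gamma_pos_of_pos (by positivity)
  simp only [mlTermDeriv, Real.norm_eq_abs, abs_mul, abs_div, abs_pow, abs_of_pos hΓ,
    abs_of_nonneg hρ, Nat.abs_cast, abs_of_nonneg (rpow_nonneg hs.1.le _),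
    abs_of_nonneg (rpow_nonneg (sub_nonneg.2 hs.2) _)]

theorem caputo_ML_mul_rpow (hρ0 : 0 < ρ) (hρ1 : ρ < 1) (x : ℝ) (ht : 0 < t) :
    caputo ρ (fun u => ML ρ 1 (x * u ^ ρ)) t = x * ML ρ 1 (x * t ^ ρ) := by
  set F : ℕ → ℝ → ℝ := fun k s => (t - s) ^ (-ρ) * mlTermDeriv ρ x k s
  have hseries : EqOn (fun s => (t - s) ^ (-ρ) * deriv (fun u => ML ρ 1 (x * u ^ ρ)) s)
      (fun s => ∑' k, F k s) (Ioc 0 t) := fun s hs => by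
    simp only [(hasDerivAt_ML_mul_rpow hρ0 x hs.1).deriv, F, ← tsum_mul_left]
  have hint (k : ℕ) : IntegrableOn (F k) (Ioc 0 t) :=
    integrableOn_mul_mlTermDeriv hρ0 hρ1 x k ht
  have hnorm : Summable fun k => ∫ s in Ioc 0 t, ‖F k s‖ := by
    have (k : ℕ) : ∫ s in Ioc 0 t, ‖F k s‖ =
        ∫ s in Ioc 0 t, (t - s) ^ (-ρ) * mlTermDeriv ρ |x| k s :=
      setIntegral_congr_fun measurableSet_Ioc fun s hs => norm_mul_mlTermDeriv hρ0.le x k hs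
    simp only [this]
    rw [← summable_nat_add_iff 1]
    simp only [setIntegral_mul_mlTermDeriv_succ hρ0 hρ1 |x| _ ht]
    exact (summable_mlTerm hρ0 |x| ht.le).mul_left _
  have hsum : Summable fun k => ∫ s in Ioc 0 t, F k s :=
    hnorm.of_norm_bounded fun k => norm_integral_le_integral_norm _
  rw [caputo, integral_of_le ht.le, setIntegral_congr_fun measurableSet_Ioc hseries,
    ← integral_tsum_of_summable_integral_norm hint hnorm, hsum.tsum_eq_zero_add]
  simp only [F, mlTermDeriv_zero, Pi.zero_apply, mul_zero, integral_zero, zero_add,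
    setIntegral_mul_mlTermDeriv_succ hρ0 hρ1 x _ ht, tsum_mul_left,
    ← ML_mul_rpow_eq_tsum_mlTerm x ht.le]
  have : Gamma (1 - ρ) ≠ 0 := (Gamma_pos_of_pos (by linarith)).ne'
  field_simp

end MittagLeffler

theorem mittagLeffler_solves_ode_general (ρ lam : ℝ) (hρ : ρ ∈ Set.Ioo (0:ℝ) 1) :
    let y : ℝ → ℝ := fun t => ML ρ 1 (-lam * t ^ ρ)
    (∀ t : ℝ, 0 < t → caputo ρ y t = -lam * y t) ∧ y 0 = 1 := by
  refine ⟨fun t ht => caputo_ML_mul_rpow hρ.1 hρ.2 (-lam) ht, ?_⟩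
  simp only [zero_rpow hρ.1.ne', mul_zero, ML_zero, Gamma_one, inv_one]

theorem mittagLeffler_solves_ode (ρ lam : ℝ) (hρ : ρ ∈ Set.Ioo (0:ℝ) 1) (hlam : 0 < lam) :
    let y : ℝ → ℝ := fun t => ML ρ 1 (-lam * t ^ ρ)
    (∀ t : ℝ, 0 < t → caputo ρ y t = -lam * y t) ∧ y 0 = 1 :=
  mittagLeffler_solves_ode_general ρ lam hρ
end
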